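/- arXiv:2508.10969 — 2 statements merged into one kernel-verified Lean document; each statement's English description precedes it below -/
import Mathlib

section
/- Let T be a two-row increasing tableau of shape (λ1, λ2) with entries in {1,…,q} and lattice word w = w_1…w_q (letters are subsets of {1,2}). Suppose w_1 ≠ ∅, w has a balance point with first balance point j_b, and there is no teetering point before j_b. Then the lattice word of the K-promotion of T is obtained from w by changing w_{j_b} from {2} to {1}, deleting the first letter, and appending {2} at the end. -/
open Classical

/-- A cell `(row, col)` (0-indexed) of a Young diagram. -/
abbrev Cell : Type := ℕ × ℕ

/-- The cell `c` lies in the Young diagram of the shape `lam`. -/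
def inShape (lam : List ℕ) (c : Cell) : Prop := c.2 < lam.getD c.1 0

/-- `lam` is an integer partition (weakly decreasing list of positive parts). -/
def IsPartition (lam : List ℕ) : Prop :=
  lam.Pairwise (· ≥ ·) ∧ ∀ x ∈ lam, 0 < x

/-- An increasing tableau of shape `lam` with entries in `{1,…,q}`
(rows and columns strictly increase); cells outside the shape carry `0`. -/
structure IncTab (lam : List ℕ) (q : ℕ) where
  entry : Cell → ℕ
  entry_pos : ∀ c, inShape lam c → 1 ≤ entry c
  entry_le : ∀ c, inShape lam c → entry c ≤ q
  row_strict : ∀ i j : ℕ, inShape lam (i, j + 1) → entry (i, j) < entry (i, j + 1)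
  col_strict : ∀ i j : ℕ, inShape lam (i + 1, j) → entry (i, j) < entry (i + 1, j)
  zero_outside : ∀ c, ¬ inShape lam c → entry c = 0

/-- A standard Young tableau: a bijective filling by `1, …, n` where `n = |lam|`. -/
def IsStandard (lam : List ℕ) (n : ℕ) (T : IncTab lam n) : Prop :=
  n = lam.sum ∧ ∀ v, 1 ≤ v → v ≤ n → ∃! c, inShape lam c ∧ T.entry c = v

/-- Every value of `{1,…,q}` appears in the tableau. -/
def Packed (lam : List ℕ) (q : ℕ) (T : IncTab lam q) : Prop :=
  ∀ v, 1 ≤ v → v ≤ q → ∃ c : Cell, inShape lam c ∧ T.entry c = v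

/-- During (K-)gromotion, a vacated box is recorded by the value `0` (a "bullet"). -/
def isBullet (lam : List ℕ) (f : Cell → ℕ) (c : Cell) : Prop :=
  inShape lam c ∧ f c = 0

/-- `c` carries value `v` and is adjacent (on its left or above) to a bullet box. -/
def inC (lam : List ℕ) (f : Cell → ℕ) (v : ℕ) (c : Cell) : Prop :=
  inShape lam c ∧ f c = v ∧
    ((1 ≤ c.2 ∧ isBullet lam f (c.1, c.2 - 1)) ∨ (1 ≤ c.1 ∧ isBullet lam f (c.1 - 1, c.2)))

/-- One K-jeu-de-taquin substep: simultaneously all boxes with value `v` adjacent to a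
bullet become bullets, and the bullets adjacent to them receive value `v`. -/
noncomputable def substep (lam : List ℕ) (v : ℕ) (f : Cell → ℕ) : Cell → ℕ :=
  fun c =>
    if inC lam f v c then 0
    else if isBullet lam f c ∧ (inC lam f v (c.1, c.2 + 1) ∨ inC lam f v (c.1 + 1, c.2)) then v
    else f c

/-- The `j`-th value of the cyclically shifted alphabet `(α < α+1 < … < q < 1 < … < α-1)`. -/
def cyc (q α j : ℕ) : ℕ := (α - 1 + j) % q + 1

/-- State of the gromotion slide (at stage `α` of the alphabet cycle) after `j` substeps;
the base case deletes the minimal letter `α` from the upper-left corner. -/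
noncomputable def iterSub (lam : List ℕ) (q α : ℕ) (f : Cell → ℕ) : ℕ → Cell → ℕ
  | 0 => fun c => if c = ((0, 0) : Cell) ∧ f c = α then 0 else f c
  | j + 1 => substep lam (cyc q α (j + 1)) (iterSub lam q α f j)

/-- One application of (K-)gromotion at stage `α`: slide, then fill the vacated boxes
with the removed letter `α` (now maximal in the cycled alphabet). -/
noncomputable def gromote (lam : List ℕ) (q α : ℕ) (f : Cell → ℕ) : Cell → ℕ :=
  fun c =>
    if inShape lam c ∧ iterSub lam q α f (q - 1) c = 0 then α
    else iterSub lam q α f (q - 1) c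

/-- The `k`-th iterate of (K-)gromotion (stages cycle through `1, …, q`). -/
noncomputable def gromIter (lam : List ℕ) (q : ℕ) (f : Cell → ℕ) : ℕ → Cell → ℕ
  | 0 => f
  | k + 1 => gromote lam q (k % q + 1) (gromIter lam q f k)

/-- In state `f`, the value `v` is about to move from row `i+1` to row `i` (1-indexed):
a bullet in (1-indexed) row `i` has the box below it about to slide up with value `v`. -/
def moveAt (lam : List ℕ) (f : Cell → ℕ) (v i : ℕ) : Prop :=
  ∃ c : Cell, isBullet lam f c ∧ c.1 + 1 = i ∧ inC lam f v (c.1 + 1, c.2)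

/-- Edge `α → β` of the `i`-th promotion digraph `prom_i(T)`:
during the `α`-th application of (K-)gromotion, value `β` moves from row `i+1` to row `i`. -/
def promEdge (lam : List ℕ) (q i : ℕ) (T : IncTab lam q) (α β : ℕ) : Prop :=
  1 ≤ α ∧ α ≤ q ∧
  ∃ j : ℕ, j + 1 ≤ q - 1 ∧ cyc q α (j + 1) = β ∧
    moveAt lam (iterSub lam q α (gromIter lam q T.entry (α - 1)) j) β i

/-- (K-)promotion: gromotion at stage `1` followed by the relabeling `v ↦ v - 1`,
with the removed letter (temporarily `1`) becoming `q`. -/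
noncomputable def kpromote (lam : List ℕ) (q : ℕ) (f : Cell → ℕ) : Cell → ℕ :=
  fun c =>
    if inShape lam c then
      (if gromote lam q 1 f c = 1 then q else gromote lam q 1 f c - 1)
    else 0

/-- Value `v` appears in (1-indexed) row `r` of the filling `f`. -/
def appearsRow (lam : List ℕ) (f : Cell → ℕ) (r v : ℕ) : Prop :=
  1 ≤ r ∧ ∃ j : ℕ, inShape lam (r - 1, j) ∧ f (r - 1, j) = v

/-- The letter of the lattice word at position `v`: the set of (1-indexed) rows
containing value `v`. -/
def rowSetW (lam : List ℕ) (f : Cell → ℕ) (v : ℕ) : Set ℕ :=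
  {r | appearsRow lam f r v}

/-- For a standard filling: the (1-indexed) row containing value `v`. -/
noncomputable def latticeRow (lam : List ℕ) (f : Cell → ℕ) (v : ℕ) : ℕ :=
  sInf {r | appearsRow lam f r v}

/-- Number of occurrences of letter `r` among the first `j` letters of the lattice word:
the number of values `v ≤ j` appearing in row `r`. -/
noncomputable def cnt (lam : List ℕ) (f : Cell → ℕ) (r j : ℕ) : ℕ :=
  ((Finset.Icc 1 j).filter fun v => appearsRow lam f r v).card

/-- `j` is a (1-)balance point of the lattice word of a two-row filling. -/
def isBalance (lam : List ℕ) (f : Cell → ℕ) (j : ℕ) : Prop :=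
  cnt lam f 1 j = cnt lam f 2 j

/-- `j` is a (1-)teetering point of the lattice word of a two-row filling. -/
def isTeeter (lam : List ℕ) (f : Cell → ℕ) (j : ℕ) : Prop :=
  appearsRow lam f 1 j ∧ appearsRow lam f 2 j ∧ cnt lam f 1 j = cnt lam f 2 j + 1

/-- A noncrossing perfect matching of `{1,…,n}`, as a symmetric relation. -/
def IsNCMatching (n : ℕ) (M : ℕ → ℕ → Prop) : Prop :=
  (∀ a b, M a b → 1 ≤ a ∧ a ≤ n ∧ 1 ≤ b ∧ b ≤ n ∧ a ≠ b) ∧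
  (∀ a b, M a b → M b a) ∧
  (∀ a, 1 ≤ a → a ≤ n → ∃! b, M a b) ∧
  (∀ a b x y, M a x → M b y → ¬ (a < b ∧ b < x ∧ x < y))

/-- Number of occurrences of letter `r` among positions `a, …, b` of the lattice word
of a standard two-row filling. -/
noncomputable def letterCnt (lam : List ℕ) (f : Cell → ℕ) (r a b : ℕ) : ℕ :=
  ((Finset.Icc a b).filter fun p => latticeRow lam f p = r).card

/-- Positions `a < b` are matched in the noncrossing matching of the lattice word:
`w_a = 1`, `w_b = 2`, the interval `[a,b]` is balanced, and every proper prefix of it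
has strictly more `1`s than `2`s (i.e. `b` is the nearest available `2` for `a`). -/
def matchRel (lam : List ℕ) (f : Cell → ℕ) (a b : ℕ) : Prop :=
  a < b ∧ latticeRow lam f a = 1 ∧ latticeRow lam f b = 2 ∧
  letterCnt lam f 1 a b = letterCnt lam f 2 a b ∧
  ∀ m, a ≤ m → m < b → letterCnt lam f 2 a m < letterCnt lam f 1 a m

/-- The (symmetrized) noncrossing matching associated to a two-row standard filling. -/
def symMatch (lam : List ℕ) (f : Cell → ℕ) (a b : ℕ) : Prop :=
  matchRel lam f a b ∨ matchRel lam f b a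

/-- A noncrossing set partition of `{1,…,q}`, encoded by its "same block" relation. -/
def IsNCPartition (q : ℕ) (R : ℕ → ℕ → Prop) : Prop :=
  (∀ a b, R a b → 1 ≤ a ∧ a ≤ q ∧ 1 ≤ b ∧ b ≤ q) ∧
  (∀ a, 1 ≤ a → a ≤ q → R a a) ∧
  (∀ a b, R a b → R b a) ∧
  (∀ a b c, R a b → R b c → R a c) ∧
  (∀ a b x y, a < x → x < b → b < y → R a b → R x y → R a x)

/-- The defining compatibility between a two-row increasing tableau (given by its
filling `f`) and its noncrossing set partition `R` (Pechenik): singleton blocks are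
the absent values; least elements of nontrivial blocks are the values appearing only
in the top row; greatest elements are the values appearing only in the bottom row;
middle elements are the values appearing in both rows. -/
def BlockCompat (lam : List ℕ) (q : ℕ) (f : Cell → ℕ) (R : ℕ → ℕ → Prop) : Prop :=
  ∀ v, 1 ≤ v → v ≤ q →
    ((∀ u, R v u → u = v) ↔ ¬ ∃ c : Cell, inShape lam c ∧ f c = v) ∧
    (((∃ u, R v u ∧ v < u) ∧ ∀ u, R v u → v ≤ u) ↔
      (appearsRow lam f 1 v ∧ ¬ appearsRow lam f 2 v)) ∧
    (((∃ u, R v u ∧ u < v) ∧ ∀ u, R v u → u ≤ v) ↔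
      (appearsRow lam f 2 v ∧ ¬ appearsRow lam f 1 v)) ∧
    (((∃ u, R v u ∧ u < v) ∧ (∃ u, R v u ∧ v < u)) ↔
      (appearsRow lam f 1 v ∧ appearsRow lam f 2 v))


/-!
Write `a v` and `b v` for the numbers of entries `≤ v` in the top and bottom rows
(`cnt _ _ 1 v`, `cnt _ _ 2 v`): `v` is a balance point iff `a v = b v`, and a value `v + 1`
occurring in the top (bottom) row sits in its column `a v` (`b v`). The slide of K-promotion
starts at the corner, which holds `1`. While `v + 1 < j_b` the vacated box stays in the top row,
at column `a v - 1`: a value `v + 1` below it would sit at column `b v = a v - 1`, making `v + 1`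
a teetering point if `1 ∈ w_{v+1}` and a balance point otherwise. Being the first balance point,
`j_b` has letter `{2}`, so there the box drops to column `b (j_b - 1)` of the bottom row, and then
runs along that row to its end. Refilling that box and relabelling `v ↦ v - 1` gives the new
lattice word.
-/

open Finset

theorem lt_card_filter_range_iff {p : ℕ → Prop} [DecidablePred p] {n i : ℕ}
    (hp : ∀ j k, j ≤ k → k < n → p k → p j) (hi : i < n) :
    i < #{j ∈ range n | p j} ↔ p i := by
  constructor
  · intro h
    by_contra hpi
    have hsub : {j ∈ range n | p j} ⊆ range i := fun j hj => by
      rw [mem_filter, mem_range] at hj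
      exact mem_range.2 (lt_of_not_ge fun hij => hpi (hp i j hij hj.1 hj.2))
    exact absurd (card_le_card hsub) (by simpa using h)
  · intro hpi
    have hsub : range (i + 1) ⊆ {j ∈ range n | p j} := fun j hj => by
      rw [mem_range] at hj
      exact mem_filter.2 ⟨mem_range.2 (by omega), hp j i (by omega) hi hpi⟩
    simpa using card_le_card hsub

theorem cnt_zero (lam : List ℕ) (f : Cell → ℕ) (r : ℕ) : cnt lam f r 0 = 0 := by
  simp [cnt]

theorem cnt_succ (lam : List ℕ) (f : Cell → ℕ) (r v : ℕ) :
    cnt lam f r (v + 1) = cnt lam f r v + if appearsRow lam f r (v + 1) then 1 else 0 := by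
  unfold cnt
  rw [← insert_Icc_right_eq_Icc_add_one (by omega), filter_insert]
  split_ifs
  · exact card_insert_of_notMem (by simp)
  · rfl

theorem cnt_mono (lam : List ℕ) (f : Cell → ℕ) (r : ℕ) : Monotone (cnt lam f r) :=
  fun _ _ h => card_le_card (filter_subset_filter _ (Icc_subset_Icc_right h))

theorem appearsRow_of_first_balance {lam : List ℕ} {f : Cell → ℕ} {v : ℕ}
    (hlat : cnt lam f 2 v ≤ cnt lam f 1 v) (hnb : ¬ isBalance lam f v)
    (hb : isBalance lam f (v + 1)) :
    appearsRow lam f 2 (v + 1) ∧ ¬ appearsRow lam f 1 (v + 1) := by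
  unfold isBalance at hnb hb
  rw [cnt_succ, cnt_succ] at hb
  by_cases h1 : appearsRow lam f 1 (v + 1) <;> by_cases h2 : appearsRow lam f 2 (v + 1) <;>
    simp only [h1, h2, if_true, if_false, not_true, not_false_eq_true, and_true, and_false]
      at hb ⊢ <;> omega

namespace IncTab

variable {lam : List ℕ} {q : ℕ} (T : IncTab lam q)

theorem entry_lt_entry_of_lt {r i j : ℕ} (hij : i < j) (hj : inShape lam (r, j)) :
    T.entry (r, i) < T.entry (r, j) := by
  induction j, hij using Nat.le_induction with
  | base => exact T.row_strict r i hj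
  | succ j hij ih =>
    exact (ih (lt_of_le_of_lt (Nat.le_succ j) hj)).trans (T.row_strict r j hj)

theorem appearsRow_bounds {r v : ℕ} (h : appearsRow lam T.entry r v) : 1 ≤ v ∧ v ≤ q := by
  obtain ⟨-, j, hj, rfl⟩ := h
  exact ⟨T.entry_pos _ hj, T.entry_le _ hj⟩

theorem cnt_eq_card_filter_range (r v : ℕ) :
    cnt lam T.entry (r + 1) v = #{i ∈ range (lam.getD r 0) | T.entry (r, i) ≤ v} := by
  unfold cnt
  have himage : {u ∈ Icc 1 v | appearsRow lam T.entry (r + 1) u} =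
      image (fun i => T.entry (r, i)) {i ∈ range (lam.getD r 0) | T.entry (r, i) ≤ v} := by
    ext u
    simp only [mem_filter, mem_Icc, mem_image, mem_range, appearsRow, Nat.add_sub_cancel]
    constructor
    · rintro ⟨⟨-, huv⟩, -, i, hi, rfl⟩
      exact ⟨i, ⟨hi, huv⟩, rfl⟩
    · rintro ⟨i, ⟨hi, hiv⟩, rfl⟩
      exact ⟨⟨T.entry_pos (r, i) hi, hiv⟩, Nat.le_add_left 1 r, i, hi, rfl⟩
  rw [himage, card_image_of_injOn]
  intro i hi j hj hij
  simp only [coe_filter, mem_range, Set.mem_ofPred_eq] at hi hj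
  by_contra hne
  rcases lt_or_gt_of_ne hne with h | h
  · exact (T.entry_lt_entry_of_lt h hj.1).ne hij
  · exact (T.entry_lt_entry_of_lt h hi.1).ne' hij

theorem entry_le_iff_lt_cnt {r i : ℕ} (hi : inShape lam (r, i)) (v : ℕ) :
    T.entry (r, i) ≤ v ↔ i < cnt lam T.entry (r + 1) v := by
  rw [T.cnt_eq_card_filter_range]
  refine (lt_card_filter_range_iff (p := fun j => T.entry (r, j) ≤ v)
    (fun j k hjk hk hkv => ?_) hi).symm
  rcases hjk.lt_or_eq with h | rfl
  · exact (T.entry_lt_entry_of_lt h hk).le.trans hkv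
  · exact hkv

theorem entry_eq_succ_iff {r i : ℕ} (hi : inShape lam (r, i)) (v : ℕ) :
    T.entry (r, i) = v + 1 ↔
      i = cnt lam T.entry (r + 1) v ∧ appearsRow lam T.entry (r + 1) (v + 1) := by
  have hv := T.entry_le_iff_lt_cnt hi v
  have hv1 := T.entry_le_iff_lt_cnt hi (v + 1)
  rw [cnt_succ] at hv1
  split_ifs at hv1 with h <;> simp only [h, and_true, and_false, iff_false] <;> omega

theorem cnt_le_length (r v : ℕ) : cnt lam T.entry (r + 1) v ≤ lam.getD r 0 := by
  rw [T.cnt_eq_card_filter_range]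
  exact (card_filter_le _ _).trans (card_range _).le

theorem cnt_eq_length (r : ℕ) : cnt lam T.entry (r + 1) q = lam.getD r 0 := by
  rw [T.cnt_eq_card_filter_range,
    filter_true_of_mem fun i hi => T.entry_le (r, i) (mem_range.1 hi), card_range]

end IncTab

section Substep

variable {lam : List ℕ} {g : Cell → ℕ} {v : ℕ} {p : Cell}

theorem inC_right_iff (hp : isBullet lam g p) :
    inC lam g v (p.1, p.2 + 1) ↔ inShape lam (p.1, p.2 + 1) ∧ g (p.1, p.2 + 1) = v := by
  simp only [inC, Nat.add_sub_cancel, Prod.mk.eta, hp, Nat.le_add_left, and_self, true_or,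
    and_true]

theorem inC_below_iff (hp : isBullet lam g p) :
    inC lam g v (p.1 + 1, p.2) ↔ inShape lam (p.1 + 1, p.2) ∧ g (p.1 + 1, p.2) = v := by
  simp only [inC, Nat.add_sub_cancel, Prod.mk.eta, hp, Nat.le_add_left, and_self, or_true,
    and_true]

theorem eq_right_or_below_of_inC (hb : ∀ c, isBullet lam g c ↔ c = p) {c : Cell}
    (hc : inC lam g v c) : c = (p.1, p.2 + 1) ∨ c = (p.1 + 1, p.2) := by
  obtain ⟨c1, c2⟩ := c
  rcases hc.2.2 with ⟨h1, hB⟩ | ⟨h1, hB⟩ <;> rw [hb] at hB <;> subst hB <;> dsimp only at h1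
  · exact Or.inl (Prod.ext rfl (by dsimp only; omega))
  · exact Or.inr (Prod.ext (by dsimp only; omega) rfl)

theorem substep_eq_self (hb : ∀ c, isBullet lam g c ↔ c = p)
    (hr : ¬ inC lam g v (p.1, p.2 + 1)) (hd : ¬ inC lam g v (p.1 + 1, p.2)) :
    substep lam v g = g := by
  have hnone : ∀ c, ¬ inC lam g v c := fun c hc => by
    rcases eq_right_or_below_of_inC hb hc with rfl | rfl
    exacts [hr hc, hd hc]
  funext c
  unfold substep
  rw [if_neg (hnone c), if_neg]
  rintro ⟨hB, h⟩
  rw [hb] at hB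
  subst hB
  exact h.elim hr hd

theorem substep_eq_slide {d e : Cell} (hb : ∀ c, isBullet lam g c ↔ c = p)
    (hde : d = (p.1, p.2 + 1) ∧ e = (p.1 + 1, p.2) ∨ d = (p.1 + 1, p.2) ∧ e = (p.1, p.2 + 1))
    (hd : inC lam g v d) (he : ¬ inC lam g v e) :
    substep lam v g = fun c => if c = d then 0 else if c = p then v else g c := by
  have honly : ∀ c, inC lam g v c → c = d := fun c hc => by
    rcases eq_right_or_below_of_inC hb hc with rfl | rfl <;>
      rcases hde with ⟨rfl, rfl⟩ | ⟨rfl, rfl⟩ <;> first | rfl | exact absurd hc he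
  have hadj : inC lam g v (p.1, p.2 + 1) ∨ inC lam g v (p.1 + 1, p.2) := by
    rcases hde with ⟨rfl, -⟩ | ⟨rfl, -⟩
    exacts [Or.inl hd, Or.inr hd]
  funext c
  unfold substep
  by_cases hcd : c = d
  · subst hcd
    rw [if_pos hd, if_pos rfl]
  by_cases hcp : c = p
  · subst hcp
    rw [if_neg fun hc => hcd (honly c hc),
      if_pos (⟨(hb c).2 rfl, hadj⟩ : isBullet lam g c ∧ _), if_neg hcd, if_pos rfl]
  · rw [if_neg fun hc => hcd (honly c hc), if_neg fun h => hcp ((hb c).1 h.1), if_neg hcd,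
      if_neg hcp]

end Substep

theorem iterSub_one_succ (lam : List ℕ) (f : Cell → ℕ) {q j : ℕ} (hj : j + 1 < q) :
    iterSub lam q 1 f (j + 1) = substep lam (j + 2) (iterSub lam q 1 f j) := by
  simp [iterSub, cyc, Nat.mod_eq_of_lt hj]

section KPromotion

variable {lam : List ℕ} {q : ℕ} {f : Cell → ℕ}

local notation "slid" => iterSub lam q 1 f (q - 1)

theorem kpromote_eq_iff {c : Cell} (hc : inShape lam c) {m : ℕ} (hm : 1 ≤ m) (hmq : m < q) :
    kpromote lam q f c = m ↔ slid c = m + 1 := by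
  unfold kpromote gromote
  simp only [hc, true_and, if_true]
  split_ifs <;> omega

theorem kpromote_eq_self_iff {c : Cell} (hc : inShape lam c) :
    kpromote lam q f c = q ↔ slid c = 0 ∨ slid c = 1 ∨ slid c = q + 1 := by
  unfold kpromote gromote
  simp only [hc, true_and, if_true]
  split_ifs <;> omega

theorem rowSetW_kpromote {m : ℕ} (hm : 1 ≤ m) (hmq : m < q) :
    rowSetW lam (kpromote lam q f) m = rowSetW lam slid (m + 1) := by
  ext r
  exact and_congr_right fun _ => exists_congr fun _ =>
    and_congr_right fun hj => kpromote_eq_iff hj hm hmq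

theorem appearsRow_kpromote_self_iff {r : ℕ} :
    appearsRow lam (kpromote lam q f) r q ↔
      appearsRow lam slid r 0 ∨ appearsRow lam slid r 1 ∨ appearsRow lam slid r (q + 1) := by
  simp only [appearsRow]
  constructor
  · rintro ⟨hr, j, hj, hq⟩
    rcases (kpromote_eq_self_iff hj).1 hq with h | h | h
    exacts [Or.inl ⟨hr, j, hj, h⟩, Or.inr (Or.inl ⟨hr, j, hj, h⟩),
      Or.inr (Or.inr ⟨hr, j, hj, h⟩)]
  · rintro (⟨hr, j, hj, h⟩ | ⟨hr, j, hj, h⟩ | ⟨hr, j, hj, h⟩) <;>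
      exact ⟨hr, j, hj, (kpromote_eq_self_iff hj).2 (by omega)⟩

end KPromotion

/-- The vacated box has moved along the top row from the corner to `(0, x)`. -/
def slideTop (f : Cell → ℕ) (x : ℕ) : Cell → ℕ := fun c =>
  if c.1 = 0 ∧ c.2 ≤ x then (if c.2 = x then 0 else f (0, c.2 + 1)) else f c

/-- After `slideTop f x`, the value `u` has moved up into `(0, x)` and the vacated box has then
moved along the bottom row to `(1, y)`. -/
def slideBottom (f : Cell → ℕ) (x u y : ℕ) : Cell → ℕ := fun c =>
  if c.1 = 0 ∧ c.2 ≤ x then (if c.2 = x then u else f (0, c.2 + 1))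
  else if c.1 = 1 ∧ x ≤ c.2 ∧ c.2 ≤ y then (if c.2 = y then 0 else f (1, c.2 + 1))
  else f c

section SlideStates

variable (f : Cell → ℕ) (x u : ℕ)

theorem iterSub_zero_eq_slideTop (lam : List ℕ) (q : ℕ) (h : f (0, 0) = 1) :
    iterSub lam q 1 f 0 = slideTop f 0 := by
  funext ⟨r, j⟩
  simp only [iterSub, slideTop, Prod.mk.injEq]
  split_ifs <;> simp_all

theorem slideTop_succ :
    (fun c : Cell => if c = (0, x + 1) then 0 else if c = (0, x) then f (0, x + 1)
      else slideTop f x c) = slideTop f (x + 1) := by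
  funext ⟨r, j⟩
  simp only [slideTop, Prod.mk.injEq]
  grind

theorem slideBottom_self :
    (fun c : Cell => if c = (1, x) then 0 else if c = (0, x) then u
      else slideTop f x c) = slideBottom f x u x := by
  funext ⟨r, j⟩
  simp only [slideTop, slideBottom, Prod.mk.injEq]
  grind

theorem slideBottom_succ {y : ℕ} (hxy : x ≤ y) :
    (fun c : Cell => if c = (1, y + 1) then 0 else if c = (1, y) then f (1, y + 1)
      else slideBottom f x u y c) = slideBottom f x u (y + 1) := by
  funext ⟨r, j⟩
  simp only [slideBottom, Prod.mk.injEq]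
  grind

end SlideStates

section TwoRow

variable {l1 l2 : ℕ}

theorem inShape_pair {r j : ℕ} :
    inShape [l1, l2] (r, j) ↔ r = 0 ∧ j < l1 ∨ r = 1 ∧ j < l2 := by
  rcases r with _ | _ | r <;> simp [inShape]

theorem appearsRow_one_iff {f : Cell → ℕ} {v : ℕ} :
    appearsRow [l1, l2] f 1 v ↔ ∃ i < l1, f (0, i) = v := by
  simp [appearsRow, inShape_pair]

theorem appearsRow_two_iff {f : Cell → ℕ} {v : ℕ} :
    appearsRow [l1, l2] f 2 v ↔ ∃ i < l2, f (1, i) = v := by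
  simp [appearsRow, inShape_pair]

theorem mem_rowSetW_pair {f : Cell → ℕ} {v r : ℕ} :
    r ∈ rowSetW [l1, l2] f v ↔
      r = 1 ∧ appearsRow [l1, l2] f 1 v ∨ r = 2 ∧ appearsRow [l1, l2] f 2 v := by
  refine ⟨fun h => ?_, by rintro (⟨rfl, h⟩ | ⟨rfl, h⟩) <;> exact h⟩
  obtain ⟨hr, j, hj, -⟩ := id h
  rw [inShape_pair] at hj
  rcases (show r = 1 ∨ r = 2 by omega) with rfl | rfl
  exacts [Or.inl ⟨rfl, h⟩, Or.inr ⟨rfl, h⟩]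

end TwoRow

namespace IncTab

variable {l1 l2 q : ℕ} (T : IncTab [l1, l2] q)

theorem one_le_entry_zero {i : ℕ} (hi : i < l1) : 1 ≤ T.entry (0, i) :=
  T.entry_pos _ (inShape_pair.2 (Or.inl ⟨rfl, hi⟩))

theorem one_le_entry_one {i : ℕ} (hi : i < l2) : 1 ≤ T.entry (1, i) :=
  T.entry_pos _ (inShape_pair.2 (Or.inr ⟨rfl, hi⟩))

theorem entry_zero_lt_entry_one {i : ℕ} (hi : i < l2) : T.entry (0, i) < T.entry (1, i) :=
  T.col_strict 0 i (inShape_pair.2 (Or.inr ⟨rfl, hi⟩))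

theorem two_le_entry_one (hll : l2 ≤ l1) {i : ℕ} (hi : i < l2) : 2 ≤ T.entry (1, i) :=
  (T.one_le_entry_zero (hi.trans_le hll)).trans_lt (T.entry_zero_lt_entry_one hi)

theorem cnt_two_le_cnt_one (hll : l2 ≤ l1) (v : ℕ) :
    cnt [l1, l2] T.entry 2 v ≤ cnt [l1, l2] T.entry 1 v := by
  rw [T.cnt_eq_card_filter_range 0, T.cnt_eq_card_filter_range 1]
  refine card_le_card fun i hi => ?_
  simp only [List.getD_cons_succ, List.getD_cons_zero, mem_filter, mem_range] at hi ⊢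
  exact ⟨hi.1.trans_le hll, (T.entry_zero_lt_entry_one hi.1).le.trans hi.2⟩

theorem entry_zero_zero_eq_one (hll : l2 ≤ l1) (h : rowSetW [l1, l2] T.entry 1 ≠ ∅) :
    0 < l1 ∧ T.entry (0, 0) = 1 := by
  obtain ⟨r, hr⟩ := Set.nonempty_iff_ne_empty.2 h
  rcases mem_rowSetW_pair.1 hr with ⟨-, h1⟩ | ⟨-, h2⟩
  · obtain ⟨i, hi, hi1⟩ := appearsRow_one_iff.1 h1
    rcases Nat.eq_zero_or_pos i with rfl | hpos
    · exact ⟨hi, hi1⟩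
    · have := T.entry_lt_entry_of_lt hpos (inShape_pair.2 (Or.inl ⟨rfl, hi⟩))
      have := T.one_le_entry_zero (hpos.trans hi)
      omega
  · obtain ⟨i, hi, hi1⟩ := appearsRow_two_iff.1 h2
    have := T.two_le_entry_one hll hi
    omega

theorem isBullet_slideTop_iff {x : ℕ} (hx : x < l1) (c : Cell) :
    isBullet [l1, l2] (slideTop T.entry x) c ↔ c = (0, x) := by
  obtain ⟨r, j⟩ := c
  have := T.one_le_entry_zero (i := j)
  have := T.one_le_entry_zero (i := j + 1)
  have := T.one_le_entry_one (i := j)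
  simp only [isBullet, slideTop, inShape_pair, Prod.mk.injEq]
  grind

theorem isBullet_slideBottom_iff (hll : l2 ≤ l1) {x u y : ℕ} (hxy : x ≤ y) (hy : y < l2)
    (hu : u ≠ 0) (c : Cell) :
    isBullet [l1, l2] (slideBottom T.entry x u y) c ↔ c = (1, y) := by
  obtain ⟨r, j⟩ := c
  have := T.one_le_entry_zero (i := j)
  have := T.one_le_entry_zero (i := j + 1)
  have := T.one_le_entry_one (i := j)
  have := T.one_le_entry_one (i := j + 1)
  simp only [isBullet, slideBottom, inShape_pair, Prod.mk.injEq]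
  grind

theorem cnt_one_le_length (v : ℕ) : cnt [l1, l2] T.entry 1 v ≤ l1 := T.cnt_le_length 0 v

theorem cnt_two_le_length (v : ℕ) : cnt [l1, l2] T.entry 2 v ≤ l2 := T.cnt_le_length 1 v

theorem entry_zero_eq_succ_iff {i : ℕ} (hi : i < l1) (v : ℕ) :
    T.entry (0, i) = v + 1 ↔
      i = cnt [l1, l2] T.entry 1 v ∧ appearsRow [l1, l2] T.entry 1 (v + 1) :=
  T.entry_eq_succ_iff (inShape_pair.2 (Or.inl ⟨rfl, hi⟩)) v

theorem entry_one_eq_succ_iff {i : ℕ} (hi : i < l2) (v : ℕ) :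
    T.entry (1, i) = v + 1 ↔
      i = cnt [l1, l2] T.entry 2 v ∧ appearsRow [l1, l2] T.entry 2 (v + 1) :=
  T.entry_eq_succ_iff (inShape_pair.2 (Or.inr ⟨rfl, hi⟩)) v

theorem entry_one_cnt_two {v : ℕ} (h : appearsRow [l1, l2] T.entry 2 (v + 1)) :
    cnt [l1, l2] T.entry 2 v < l2 ∧ T.entry (1, cnt [l1, l2] T.entry 2 v) = v + 1 := by
  have hc := cnt_succ [l1, l2] T.entry 2 v
  rw [if_pos h] at hc
  have hlt : cnt [l1, l2] T.entry 2 v < l2 := by have := T.cnt_two_le_length (v + 1); omega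
  exact ⟨hlt, (T.entry_one_eq_succ_iff hlt v).2 ⟨rfl, h⟩⟩

theorem one_le_cnt_one (hA : T.entry (0, 0) = 1) (hl1 : 0 < l1) {v : ℕ} (hv : 1 ≤ v) :
    1 ≤ cnt [l1, l2] T.entry 1 v :=
  (T.entry_le_iff_lt_cnt (inShape_pair.2 (Or.inl ⟨rfl, hl1⟩)) v).1 (hA ▸ hv)

theorem cnt_one_one (hA : T.entry (0, 0) = 1) (hl1 : 0 < l1) : cnt [l1, l2] T.entry 1 1 = 1 := by
  rw [cnt_succ, cnt_zero, if_pos (appearsRow_one_iff.2 ⟨0, hl1, hA⟩)]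

theorem cnt_two_one (hll : l2 ≤ l1) : cnt [l1, l2] T.entry 2 1 = 0 := by
  rw [cnt_succ, cnt_zero, if_neg]
  rintro h
  obtain ⟨i, hi, h⟩ := appearsRow_two_iff.1 h
  have := T.two_le_entry_one hll hi
  omega

theorem entry_one_ne_of_not_balance_of_not_teeter {v : ℕ} (hv : 1 ≤ cnt [l1, l2] T.entry 1 v)
    (hb : ¬ isBalance [l1, l2] T.entry (v + 1)) (ht : ¬ isTeeter [l1, l2] T.entry (v + 1)) :
    T.entry (1, cnt [l1, l2] T.entry 1 v - 1) ≠ v + 1 := by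
  intro h
  have hx : cnt [l1, l2] T.entry 1 v - 1 < l2 := by
    by_contra hx
    rw [T.zero_outside _ (by rw [inShape_pair]; omega)] at h
    omega
  obtain ⟨hx2, h2⟩ := (T.entry_one_eq_succ_iff hx v).1 h
  have hc1 := cnt_succ [l1, l2] T.entry 1 v
  have hc2 := cnt_succ [l1, l2] T.entry 2 v
  rw [if_pos h2] at hc2
  unfold isBalance at hb
  by_cases h1 : appearsRow [l1, l2] T.entry 1 (v + 1)
  · rw [if_pos h1] at hc1
    exact ht ⟨h1, h2, by omega⟩
  · rw [if_neg h1] at hc1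
    omega

theorem substep_slideTop {v : ℕ} (hv : 1 ≤ cnt [l1, l2] T.entry 1 v)
    (hdown : T.entry (1, cnt [l1, l2] T.entry 1 v - 1) ≠ v + 1) :
    substep [l1, l2] (v + 1) (slideTop T.entry (cnt [l1, l2] T.entry 1 v - 1)) =
      slideTop T.entry (cnt [l1, l2] T.entry 1 (v + 1) - 1) := by
  set x := cnt [l1, l2] T.entry 1 v - 1
  have hx : x < l1 := by have := T.cnt_one_le_length v; omega
  have hb := T.isBullet_slideTop_iff (l2 := l2) hx
  have hbx := (hb (0, x)).2 rfl
  have hstay : ¬ inC [l1, l2] (slideTop T.entry x) (v + 1) (1, x) := fun h =>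
    hdown (by simpa [slideTop] using ((inC_below_iff hbx).1 h).2)
  have hc := cnt_succ [l1, l2] T.entry 1 v
  by_cases h1 : appearsRow [l1, l2] T.entry 1 (v + 1)
  · rw [if_pos h1] at hc
    have hx1 : x + 1 < l1 := by have := T.cnt_one_le_length (v + 1); omega
    have hA : T.entry (0, x + 1) = v + 1 := (T.entry_zero_eq_succ_iff hx1 v).2 ⟨by omega, h1⟩
    have hmove : inC [l1, l2] (slideTop T.entry x) (v + 1) (0, x + 1) :=
      (inC_right_iff hbx).2
        ⟨inShape_pair.2 (Or.inl ⟨rfl, hx1⟩), by simpa [slideTop] using hA⟩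
    rw [substep_eq_slide (d := (0, x + 1)) (e := (1, x)) hb (Or.inl ⟨rfl, rfl⟩)
      hmove hstay, show cnt [l1, l2] T.entry 1 (v + 1) - 1 = x + 1 by omega,
      ← slideTop_succ, hA]
  · rw [if_neg h1, add_zero] at hc
    rw [hc, substep_eq_self hb (fun h => ?_) hstay]
    obtain ⟨hs, h⟩ := (inC_right_iff hbx).1 h
    have hx1 : x + 1 < l1 := by rw [inShape_pair] at hs; omega
    exact h1 ((T.entry_zero_eq_succ_iff hx1 v).1 (by simpa [slideTop] using h)).2

theorem substep_slideTop_of_entry_one_eq (hll : l2 ≤ l1) {x v : ℕ} (hx : x < l2)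
    (hdown : T.entry (1, x) = v + 1) (hright : ¬ appearsRow [l1, l2] T.entry 1 (v + 1)) :
    substep [l1, l2] (v + 1) (slideTop T.entry x) = slideBottom T.entry x (v + 1) x := by
  have hb := T.isBullet_slideTop_iff (l2 := l2) (hx.trans_le hll)
  have hbx := (hb (0, x)).2 rfl
  have hmove : inC [l1, l2] (slideTop T.entry x) (v + 1) (1, x) :=
    (inC_below_iff hbx).2
      ⟨inShape_pair.2 (Or.inr ⟨rfl, hx⟩), by simpa [slideTop] using hdown⟩
  have hstay : ¬ inC [l1, l2] (slideTop T.entry x) (v + 1) (0, x + 1) := fun h => by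
    obtain ⟨hs, h⟩ := (inC_right_iff hbx).1 h
    rw [inShape_pair] at hs
    exact hright (appearsRow_one_iff.2 ⟨x + 1, by omega, by simpa [slideTop] using h⟩)
  rw [substep_eq_slide (d := (1, x)) (e := (0, x + 1)) hb (Or.inr ⟨rfl, rfl⟩)
    hmove hstay]
  exact slideBottom_self T.entry x (v + 1)

theorem substep_slideBottom (hll : l2 ≤ l1) {x u v : ℕ} (hu : u ≠ 0)
    (hx : x < cnt [l1, l2] T.entry 2 v) :
    substep [l1, l2] (v + 1) (slideBottom T.entry x u (cnt [l1, l2] T.entry 2 v - 1)) =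
      slideBottom T.entry x u (cnt [l1, l2] T.entry 2 (v + 1) - 1) := by
  set y := cnt [l1, l2] T.entry 2 v - 1
  have hy : y < l2 := by have := T.cnt_two_le_length v; omega
  have hb := T.isBullet_slideBottom_iff hll (show x ≤ y by omega) hy hu
  have hby := (hb (1, y)).2 rfl
  have hstay : ¬ inC [l1, l2] (slideBottom T.entry x u y) (v + 1) (2, y) := fun h => by
    have hs := ((inC_below_iff hby).1 h).1
    rw [inShape_pair] at hs
    omega
  have hc := cnt_succ [l1, l2] T.entry 2 v
  by_cases h2 : appearsRow [l1, l2] T.entry 2 (v + 1)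
  · rw [if_pos h2] at hc
    have hy1 : y + 1 < l2 := by have := T.cnt_two_le_length (v + 1); omega
    have hB : T.entry (1, y + 1) = v + 1 := (T.entry_one_eq_succ_iff hy1 v).2 ⟨by omega, h2⟩
    have hmove : inC [l1, l2] (slideBottom T.entry x u y) (v + 1) (1, y + 1) :=
      (inC_right_iff hby).2
        ⟨inShape_pair.2 (Or.inr ⟨rfl, hy1⟩), by simpa [slideBottom] using hB⟩
    rw [substep_eq_slide (d := (1, y + 1)) (e := (2, y)) hb (Or.inl ⟨rfl, rfl⟩)
      hmove hstay, show cnt [l1, l2] T.entry 2 (v + 1) - 1 = y + 1 by omega,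
      ← slideBottom_succ T.entry x u (show x ≤ y by omega), hB]
  · rw [if_neg h2, add_zero] at hc
    rw [hc, substep_eq_self hb (fun h => ?_) hstay]
    obtain ⟨hs, h⟩ := (inC_right_iff hby).1 h
    rw [inShape_pair] at hs
    exact h2 (appearsRow_two_iff.2 ⟨y + 1, by omega, by simpa [slideBottom] using h⟩)

theorem iterSub_eq_slideTop (hA : T.entry (0, 0) = 1) (hl1 : 0 < l1) {v : ℕ} (hvq : v < q)
    (hfirst : ∀ m, 1 ≤ m → m < v + 1 → ¬ isBalance [l1, l2] T.entry m)
    (hnoteet : ∀ m, 1 ≤ m → m < v + 1 → ¬ isTeeter [l1, l2] T.entry m) :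
    ∀ j < v, iterSub [l1, l2] q 1 T.entry j =
      slideTop T.entry (cnt [l1, l2] T.entry 1 (j + 1) - 1)
  | 0, _ => by rw [T.cnt_one_one hA hl1]; exact iterSub_zero_eq_slideTop _ _ _ hA
  | j + 1, hj => by
    have hpos := T.one_le_cnt_one hA hl1 (Nat.le_add_left 1 j)
    rw [iterSub_one_succ _ _ (by omega), iterSub_eq_slideTop hA hl1 hvq hfirst hnoteet j (by omega),
      T.substep_slideTop hpos (T.entry_one_ne_of_not_balance_of_not_teeter hpos
        (hfirst _ (by omega) (by omega)) (hnoteet _ (by omega) (by omega)))]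

theorem iterSub_eq_slideBottom (hll : l2 ≤ l1) (hA : T.entry (0, 0) = 1) (hl1 : 0 < l1)
    {v : ℕ} (hv : 1 ≤ v) (hvq : v < q)
    (hletter : appearsRow [l1, l2] T.entry 2 (v + 1) ∧ ¬ appearsRow [l1, l2] T.entry 1 (v + 1))
    (hbal : isBalance [l1, l2] T.entry (v + 1))
    (hfirst : ∀ m, 1 ≤ m → m < v + 1 → ¬ isBalance [l1, l2] T.entry m)
    (hnoteet : ∀ m, 1 ≤ m → m < v + 1 → ¬ isTeeter [l1, l2] T.entry m) :
    ∀ j, v ≤ j → j < q → iterSub [l1, l2] q 1 T.entry j =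
      slideBottom T.entry (cnt [l1, l2] T.entry 2 v) (v + 1)
        (cnt [l1, l2] T.entry 2 (j + 1) - 1) := by
  have hc1 := cnt_succ [l1, l2] T.entry 1 v
  have hc2 := cnt_succ [l1, l2] T.entry 2 v
  rw [if_neg hletter.2] at hc1
  rw [if_pos hletter.1] at hc2
  unfold isBalance at hbal
  intro j hj
  induction j, hj using Nat.le_induction with
  | base =>
    intro _
    obtain ⟨hx, hB⟩ := T.entry_one_cnt_two hletter.1
    obtain ⟨k, rfl⟩ : ∃ k, v = k + 1 := ⟨v - 1, by omega⟩
    rw [iterSub_one_succ _ _ hvq, T.iterSub_eq_slideTop hA hl1 hvq hfirst hnoteet k (by omega),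
      show cnt [l1, l2] T.entry 1 (k + 1) - 1 = cnt [l1, l2] T.entry 2 (k + 1) by omega,
      T.substep_slideTop_of_entry_one_eq hll hx hB hletter.2,
      show cnt [l1, l2] T.entry 2 (k + 1 + 1) - 1 = cnt [l1, l2] T.entry 2 (k + 1) by omega]
  | succ j hj ih =>
    intro hjq
    have := cnt_mono [l1, l2] T.entry 2 (show v + 1 ≤ j + 1 by omega)
    rw [iterSub_one_succ _ _ hjq, ih (by omega), T.substep_slideBottom hll (by omega) (by omega)]

theorem appearsRow_one_slideBottom_iff (hA : T.entry (0, 0) = 1) {x u y w : ℕ} (hx : x < l1) :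
    appearsRow [l1, l2] (slideBottom T.entry x u y) 1 w ↔
      w = u ∨ w ≠ 1 ∧ appearsRow [l1, l2] T.entry 1 w := by
  have hrow : ∀ {i}, i < l1 → 0 < i → 1 < T.entry (0, i) := fun hi hpos =>
    hA ▸ T.entry_lt_entry_of_lt hpos (inShape_pair.2 (Or.inl ⟨rfl, hi⟩))
  simp only [appearsRow_one_iff, slideBottom, zero_ne_one, false_and, if_false, true_and]
  constructor
  · rintro ⟨i, hi, h⟩
    split_ifs at h
    · exact Or.inl h.symm
    · exact Or.inr ⟨by have := hrow (show i + 1 < l1 by omega) (by omega); omega, i + 1,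
        by omega, h⟩
    · exact Or.inr ⟨by have := hrow hi (show 0 < i by omega); omega, i, hi, h⟩
  · rintro (rfl | ⟨hw, i, hi, rfl⟩)
    · exact ⟨x, hx, by simp⟩
    have hpos : 0 < i := Nat.pos_of_ne_zero fun h => hw (h ▸ hA)
    by_cases hix : i ≤ x
    · exact ⟨i - 1, by omega, by simp [show i - 1 ≤ x by omega, show i - 1 ≠ x by omega,
        Nat.sub_add_cancel hpos]⟩
    · exact ⟨i, hi, by simp [hix]⟩

theorem appearsRow_two_slideBottom_iff {x u w : ℕ} (hx : x < l2) (hxu : T.entry (1, x) = u) :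
    appearsRow [l1, l2] (slideBottom T.entry x u (l2 - 1)) 2 w ↔
      w = 0 ∨ w ≠ u ∧ appearsRow [l1, l2] T.entry 2 w := by
  have hinj : ∀ {i j}, i < l2 → j < l2 → T.entry (1, i) = T.entry (1, j) → i = j :=
    fun hi hj h => by
      by_contra hne
      rcases lt_or_gt_of_ne hne with hlt | hlt
      · exact (T.entry_lt_entry_of_lt hlt (inShape_pair.2 (Or.inr ⟨rfl, hj⟩))).ne h
      · exact (T.entry_lt_entry_of_lt hlt (inShape_pair.2 (Or.inr ⟨rfl, hi⟩))).ne' h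
  simp only [appearsRow_two_iff, slideBottom, one_ne_zero, false_and, if_false, true_and]
  constructor
  · rintro ⟨i, hi, h⟩
    split_ifs at h
    · exact Or.inl h.symm
    · refine Or.inr ⟨fun hwu => ?_, i + 1, by omega, h⟩
      have := hinj (show i + 1 < l2 by omega) hx (h.trans (hwu.trans hxu.symm))
      omega
    · refine Or.inr ⟨fun hwu => ?_, i, hi, h⟩
      have := hinj hi hx (h.trans (hwu.trans hxu.symm))
      omega
  · rintro (rfl | ⟨hwu, i, hi, rfl⟩)
    · exact ⟨l2 - 1, by omega, by simp [show x ≤ l2 - 1 by omega]⟩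
    have hix : i ≠ x := fun h => hwu (h ▸ hxu)
    by_cases hlt : i < x
    · exact ⟨i, hi, by simp [show ¬ x ≤ i by omega]⟩
    · exact ⟨i - 1, by omega, by simp [show x ≤ i - 1 by omega, show i - 1 ≠ l2 - 1 by omega,
        show i - 1 ≤ l2 - 1 by omega, Nat.sub_add_cancel (show 1 ≤ i by omega)]⟩

theorem rowSetW_slideBottom (hll : l2 ≤ l1) (hA : T.entry (0, 0) = 1) {x u w : ℕ}
    (hx : x < l2) (hxu : T.entry (1, x) = u) (hu : ¬ appearsRow [l1, l2] T.entry 1 u)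
    (hw : 2 ≤ w) :
    rowSetW [l1, l2] (slideBottom T.entry x u (l2 - 1)) w =
      if w = u then {1} else rowSetW [l1, l2] T.entry w := by
  ext r
  rw [mem_rowSetW_pair, T.appearsRow_one_slideBottom_iff hA (hx.trans_le hll),
    T.appearsRow_two_slideBottom_iff hx hxu]
  split_ifs with hwu
  · subst hwu
    simp [hu, show w ≠ 0 by omega]
  · simp [mem_rowSetW_pair, hwu, show w ≠ 0 by omega, show w ≠ 1 by omega]

theorem rowSetW_kpromote_self (hll : l2 ≤ l1) (hA : T.entry (0, 0) = 1) {x u : ℕ}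
    (hx : x < l2) (hxu : T.entry (1, x) = u)
    (hG : iterSub [l1, l2] q 1 T.entry (q - 1) = slideBottom T.entry x u (l2 - 1)) :
    rowSetW [l1, l2] (kpromote [l1, l2] q T.entry) q = {2} := by
  have hu2 : 2 ≤ u := hxu ▸ T.two_le_entry_one hll hx
  have huq : u ≤ q := hxu ▸ T.entry_le _ (inShape_pair.2 (Or.inr ⟨rfl, hx⟩))
  have hrow1 :
      ∀ w, w ≤ 1 ∨ q < w → ¬ appearsRow [l1, l2] (slideBottom T.entry x u (l2 - 1)) 1 w :=
    fun w hw h => by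
      rcases (T.appearsRow_one_slideBottom_iff hA (hx.trans_le hll)).1 h with rfl | ⟨hw1, h⟩
      · omega
      · have := T.appearsRow_bounds h
        omega
  ext r
  rw [mem_rowSetW_pair, appearsRow_kpromote_self_iff, appearsRow_kpromote_self_iff, hG,
    Set.mem_singleton_iff]
  constructor
  · rintro (⟨rfl, h | h | h⟩ | ⟨rfl, -⟩)
    · exact absurd h (hrow1 0 (by omega))
    · exact absurd h (hrow1 1 (by omega))
    · exact absurd h (hrow1 (q + 1) (by omega))
    · rfl
  · rintro rfl
    exact Or.inr ⟨rfl, Or.inl ((T.appearsRow_two_slideBottom_iff hx hxu).2 (Or.inl rfl))⟩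

end IncTab

/-- two-row K-promotion, case of a first balance point `j_b` with no
earlier teetering point: the new lattice word changes `w_{j_b}` from `{2}` to `{1}`,
deletes the first letter, and appends `{2}`. -/
theorem two_row_Kpromotion_balance_no_teeter
    (l1 l2 q : ℕ) (hll : l2 ≤ l1) (T : IncTab [l1, l2] q)
    (hw1 : rowSetW [l1, l2] T.entry 1 ≠ (∅ : Set ℕ))
    (jb : ℕ) (hjb1 : 1 ≤ jb) (hjbq : jb ≤ q)
    (hbal : isBalance [l1, l2] T.entry jb)
    (hfirst : ∀ m, 1 ≤ m → m < jb → ¬ isBalance [l1, l2] T.entry m)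
    (hnoteet : ∀ m, 1 ≤ m → m < jb → ¬ isTeeter [l1, l2] T.entry m) :
    rowSetW [l1, l2] T.entry jb = ({2} : Set ℕ) ∧
    (∀ m, 1 ≤ m → m < q →
      rowSetW [l1, l2] (kpromote [l1, l2] q T.entry) m =
        (if m + 1 = jb then ({1} : Set ℕ) else rowSetW [l1, l2] T.entry (m + 1))) ∧
    rowSetW [l1, l2] (kpromote [l1, l2] q T.entry) q = ({2} : Set ℕ) := by
  obtain ⟨hl1, hA⟩ := T.entry_zero_zero_eq_one hll hw1
  obtain ⟨v, rfl⟩ : ∃ v, jb = v + 1 := ⟨jb - 1, by omega⟩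
  have hv : 1 ≤ v := by
    by_contra hv0
    obtain rfl : v = 0 := by omega
    have := T.cnt_one_one hA hl1
    have := T.cnt_two_one hll
    rw [isBalance, zero_add] at hbal
    omega
  have hletter := appearsRow_of_first_balance (T.cnt_two_le_cnt_one hll v)
    (hfirst v hv (by omega)) hbal
  obtain ⟨hx, hxjb⟩ := T.entry_one_cnt_two hletter.1
  have hG : iterSub [l1, l2] q 1 T.entry (q - 1) =
      slideBottom T.entry (cnt [l1, l2] T.entry 2 v) (v + 1) (l2 - 1) := by
    rw [T.iterSub_eq_slideBottom hll hA hl1 hv (by omega) hletter hbal hfirst hnoteet (q - 1)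
      (by omega) (by omega), Nat.sub_add_cancel (by omega),
      show cnt [l1, l2] T.entry 2 q = l2 from T.cnt_eq_length 1]
  refine ⟨?_, fun m hm hmq => ?_, T.rowSetW_kpromote_self hll hA hx hxjb hG⟩
  · ext r
    simp [mem_rowSetW_pair, hletter]
  · rw [rowSetW_kpromote hm hmq, hG, T.rowSetW_slideBottom hll hA hx hxjb hletter.2 (by omega)]
end

section
/- Let T ∈ Inc^q(2 × c) with lattice word w (over subsets of {1,2}) and associated noncrossing set partition π(T); let B_1 be the block containing 1. Then: (a) w_1 = ∅ iff |B_1| = 1; (b) if w_1 ≠ ∅, the first balance point of w equals max B_1; (c) if w_1 ≠ ∅, there is a teetering point before the first balance point iff |B_1| > 2; and (d) in that case the teetering points before the first balance point are exactly the elements of B_1 \ {1, max B_1}, so the first such teetering point is min(B_1 \ {1}). -/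
open Classical

/-!
By the definition of `π(T)`, the excess of `1`s over `2`s in the prefix `w₁ ⋯ w_j` is the
number of least elements of nontrivial blocks in `[1, j]` minus the number of greatest elements
there, that is, the number of blocks *open* at `j` (least element `≤ j <` greatest element).
If `B₁` is nontrivial it is open on `[1, max B₁)`, and noncrossingness forbids a block opened
after `1` from still being open at an element of `B₁`. Hence `max B₁` is the first balance
point, and a middle element `m < max B₁` is a teetering point exactly when `B₁` is the only
open block, that is, when `m ∈ B₁`.
-/

/-- The block of `v`, with `v` inserted so that it is nonempty even for `v ∉ [1, q]`. -/
noncomputable def blockOf (q : ℕ) (R : ℕ → ℕ → Prop) (v : ℕ) : Finset ℕ :=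
  insert v ((Finset.Icc 1 q).filter (R v))

noncomputable def blockMin (q : ℕ) (R : ℕ → ℕ → Prop) (v : ℕ) : ℕ :=
  (blockOf q R v).min' (Finset.insert_nonempty _ _)

noncomputable def blockMax (q : ℕ) (R : ℕ → ℕ → Prop) (v : ℕ) : ℕ :=
  (blockOf q R v).max' (Finset.insert_nonempty _ _)

def IsOpener (R : ℕ → ℕ → Prop) (v : ℕ) : Prop :=
  (∃ u, R v u ∧ v < u) ∧ ∀ u, R v u → v ≤ u

def IsCloser (R : ℕ → ℕ → Prop) (v : ℕ) : Prop :=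
  (∃ u, R v u ∧ u < v) ∧ ∀ u, R v u → u ≤ v

def IsMiddle (R : ℕ → ℕ → Prop) (v : ℕ) : Prop :=
  (∃ u, R v u ∧ u < v) ∧ ∃ u, R v u ∧ v < u

noncomputable def openers (R : ℕ → ℕ → Prop) (j : ℕ) : Finset ℕ :=
  (Finset.Icc 1 j).filter (IsOpener R)

noncomputable def closers (R : ℕ → ℕ → Prop) (j : ℕ) : Finset ℕ :=
  (Finset.Icc 1 j).filter (IsCloser R)

noncomputable def middles (R : ℕ → ℕ → Prop) (j : ℕ) : Finset ℕ :=
  (Finset.Icc 1 j).filter (IsMiddle R)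

/-- The blocks open at `j`, represented by their least elements. -/
noncomputable def openAt (q : ℕ) (R : ℕ → ℕ → Prop) (j : ℕ) : Finset ℕ :=
  (openers R j).filter (fun x => j < blockMax q R x)

namespace IsNCPartition

variable {q : ℕ} {R : ℕ → ℕ → Prop} {a b c u v x y j m : ℕ}

theorem bounds (hR : IsNCPartition q R) (h : R a b) : 1 ≤ a ∧ a ≤ q ∧ 1 ≤ b ∧ b ≤ q :=
  hR.1 a b h

theorem refl_left (hR : IsNCPartition q R) (h : R a b) : R a a :=
  hR.2.1 a (hR.bounds h).1 (hR.bounds h).2.1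

theorem symm (hR : IsNCPartition q R) (h : R a b) : R b a :=
  hR.2.2.1 a b h

theorem trans (hR : IsNCPartition q R) (h : R a b) (h' : R b c) : R a c :=
  hR.2.2.2.1 a b c h h'

theorem noncrossing (hR : IsNCPartition q R) (hax : a < x) (hxb : x < b) (hby : b < y)
    (hab : R a b) (hxy : R x y) : R a x :=
  hR.2.2.2.2 a b x y hax hxb hby hab hxy

theorem mem_blockOf (hR : IsNCPartition q R) (h : R v u) : u ∈ blockOf q R v :=
  Finset.mem_insert_of_mem <| Finset.mem_filter.mpr
    ⟨Finset.mem_Icc.mpr ⟨(hR.bounds h).2.2.1, (hR.bounds h).2.2.2⟩, h⟩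

theorem R_of_mem_blockOf (hv : R v v) (h : u ∈ blockOf q R v) : R v u := by
  rcases Finset.mem_insert.mp h with rfl | h
  · exact hv
  · exact (Finset.mem_filter.mp h).2

theorem R_blockMin (hv : R v v) : R v (blockMin q R v) :=
  R_of_mem_blockOf hv (Finset.min'_mem _ _)

theorem R_blockMax (hv : R v v) : R v (blockMax q R v) :=
  R_of_mem_blockOf hv (Finset.max'_mem _ _)

theorem blockMin_le (hR : IsNCPartition q R) (h : R v u) : blockMin q R v ≤ u :=
  Finset.min'_le _ _ (hR.mem_blockOf h)

theorem le_blockMax (hR : IsNCPartition q R) (h : R v u) : u ≤ blockMax q R v :=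
  Finset.le_max' _ _ (hR.mem_blockOf h)

theorem isOpener_blockMin (hR : IsNCPartition q R) (h : R v u) (hlt : u < v) :
    IsOpener R (blockMin q R v) := by
  have hmin := R_blockMin (q := q) (hR.refl_left h)
  exact ⟨⟨v, hR.symm hmin, (hR.blockMin_le h).trans_lt hlt⟩,
    fun w hw => hR.blockMin_le (hR.trans hmin hw)⟩

theorem isCloser_blockMax (hR : IsNCPartition q R) (h : R v u) (hlt : v < u) :
    IsCloser R (blockMax q R v) := by
  have hmax := R_blockMax (q := q) (hR.refl_left h)
  exact ⟨⟨v, hR.symm hmax, hlt.trans_le (hR.le_blockMax h)⟩,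
    fun w hw => hR.le_blockMax (hR.trans hmax hw)⟩

theorem blockMin_blockMax_of_isOpener (hR : IsNCPartition q R) (hx : IsOpener R x) :
    blockMin q R (blockMax q R x) = x := by
  obtain ⟨⟨u, hu, -⟩, hmin⟩ := hx
  have hmax : R x (blockMax q R x) := R_blockMax (hR.refl_left hu)
  refine le_antisymm (hR.blockMin_le (hR.symm hmax)) (hmin _ (hR.trans hmax ?_))
  exact R_blockMin (hR.refl_left (hR.symm hmax))

theorem blockMax_blockMin_of_isCloser (hR : IsNCPartition q R) (hy : IsCloser R y) :
    blockMax q R (blockMin q R y) = y := by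
  obtain ⟨⟨u, hu, -⟩, hmax⟩ := hy
  have hmin : R y (blockMin q R y) := R_blockMin (hR.refl_left hu)
  refine le_antisymm (hmax _ (hR.trans hmin ?_)) (hR.le_blockMax (hR.symm hmin))
  exact R_blockMax (hR.refl_left (hR.symm hmin))

/-- `blockMax` matches the openers whose block has closed by `j` with the closers up to `j`. -/
theorem card_openers_eq (hR : IsNCPartition q R) (j : ℕ) :
    (openers R j).card = (closers R j).card + (openAt q R j).card := by
  have hclosed : ((openers R j).filter (fun x => blockMax q R x ≤ j)).card =
      (closers R j).card := by
    refine Finset.card_nbij' (blockMax q R) (blockMin q R) ?_ ?_ ?_ ?_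
    · intro x hx
      simp only [Finset.mem_coe, Finset.mem_filter, openers, closers, Finset.mem_Icc] at hx ⊢
      obtain ⟨⟨⟨hx1, -⟩, ⟨u, hu, hxu⟩, -⟩, hxj⟩ := hx
      have := hxu.trans_le (hR.le_blockMax hu)
      exact ⟨⟨by omega, hxj⟩, hR.isCloser_blockMax hu hxu⟩
    · intro y hy
      simp only [Finset.mem_coe, Finset.mem_filter, openers, closers, Finset.mem_Icc] at hy ⊢
      obtain ⟨⟨-, hyj⟩, hy⟩ := hy
      obtain ⟨u, hu, huy⟩ := hy.1
      have hle := hR.blockMin_le hu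
      have h1 := (hR.bounds (R_blockMin (q := q) (hR.refl_left hu))).2.2.1
      refine ⟨⟨⟨h1, by omega⟩, hR.isOpener_blockMin hu huy⟩, ?_⟩
      rw [hR.blockMax_blockMin_of_isCloser hy]
      exact hyj
    · intro x hx
      exact hR.blockMin_blockMax_of_isOpener (Finset.mem_filter.mp (Finset.mem_filter.mp hx).1).2
    · intro y hy
      exact hR.blockMax_blockMin_of_isCloser (Finset.mem_filter.mp hy).2
  have hopen : (openers R j).filter (fun x => ¬ blockMax q R x ≤ j) = openAt q R j :=
    Finset.filter_congr fun _ _ => not_le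
  rw [← Finset.card_filter_add_card_filter_not (s := openers R j) (fun x => blockMax q R x ≤ j),
    hclosed, hopen]

theorem isOpener_one (hR : IsNCPartition q R) (h : ¬ ∀ u, R 1 u → u = 1) : IsOpener R 1 := by
  simp only [not_forall] at h
  obtain ⟨u, hu, hu1⟩ := h
  have := (hR.bounds hu).2.2.1
  exact ⟨⟨u, hu, by omega⟩, fun w hw => (hR.bounds hw).2.2.1⟩

theorem openAt_subset_singleton_one (hR : IsNCPartition q R) (hj : R 1 j) :
    openAt q R j ⊆ {1} := by
  intro x hx
  simp only [openAt, openers, Finset.mem_filter, Finset.mem_Icc] at hx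
  obtain ⟨⟨⟨hx1, hxj⟩, hx⟩, hjx⟩ := hx
  rw [Finset.mem_singleton]
  by_contra hne
  have hR1x : R 1 x := by
    rcases hxj.lt_or_eq with hlt | rfl
    · obtain ⟨⟨u, hu, -⟩, -⟩ := hx
      exact hR.noncrossing (by omega) hlt hjx hj (R_blockMax (hR.refl_left hu))
    · exact hj
  have := hx.2 1 (hR.symm hR1x)
  omega

theorem one_mem_openAt (h1 : IsOpener R 1) (hj : 1 ≤ j) (hjb : j < blockMax q R 1) :
    1 ∈ openAt q R j := by
  simp only [openAt, openers, Finset.mem_filter, Finset.mem_Icc]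
  exact ⟨⟨⟨le_rfl, hj⟩, h1⟩, hjb⟩

theorem R_one_blockMax_one (hR : IsNCPartition q R) (h1 : IsOpener R 1) :
    R 1 (blockMax q R 1) :=
  R_blockMax (hR.refl_left h1.1.choose_spec.1)

theorem openAt_blockMax_one (hR : IsNCPartition q R) (h1 : IsOpener R 1) :
    openAt q R (blockMax q R 1) = ∅ := by
  refine Finset.eq_empty_of_forall_notMem fun x hx => ?_
  obtain rfl := Finset.mem_singleton.mp
    (hR.openAt_subset_singleton_one (hR.R_one_blockMax_one h1) hx)
  exact lt_irrefl _ (Finset.mem_filter.mp hx).2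

theorem openAt_eq_singleton_one (hR : IsNCPartition q R) (h1 : IsOpener R 1) (hm : R 1 m)
    (hm1 : 1 ≤ m) (hmb : m < blockMax q R 1) : openAt q R m = {1} :=
  (hR.openAt_subset_singleton_one hm).antisymm
    (Finset.singleton_subset_iff.mpr (one_mem_openAt h1 hm1 hmb))

/-- A middle element outside the block of `1` keeps its own block open besides that of `1`. -/
theorem one_lt_card_openAt (hR : IsNCPartition q R) (h1 : IsOpener R 1) (hm : IsMiddle R m)
    (hm1 : ¬ R 1 m) (hmb : m < blockMax q R 1) : 1 < (openAt q R m).card := by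
  obtain ⟨⟨u, hu, hum⟩, ⟨w, hw, hmw⟩⟩ := hm
  have hRa : R m (blockMin q R m) := R_blockMin (hR.refl_left hu)
  have ha : blockMin q R m ∈ openAt q R m := by
    simp only [openAt, openers, Finset.mem_filter, Finset.mem_Icc]
    have := hR.blockMin_le hu
    refine ⟨⟨⟨(hR.bounds hRa).2.2.1, by omega⟩, hR.isOpener_blockMin hu hum⟩, ?_⟩
    exact hmw.trans_le (hR.le_blockMax (hR.trans (hR.symm hRa) hw))
  have ha1 : blockMin q R m ≠ 1 := fun h => hm1 (hR.symm (h ▸ hRa))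
  have hpair : {1, blockMin q R m} ⊆ openAt q R m :=
    Finset.insert_subset (one_mem_openAt h1 (hR.bounds hu).1 hmb)
      (Finset.singleton_subset_iff.mpr ha)
  have := Finset.card_le_card hpair
  rw [Finset.card_pair ha1.symm] at this
  omega

end IsNCPartition

namespace BlockCompat

variable {lam : List ℕ} {q : ℕ} {f : Cell → ℕ} {R : ℕ → ℕ → Prop} {v j m : ℕ}

theorem isOpener_iff (hcompat : BlockCompat lam q f R) (hv : 1 ≤ v) (hvq : v ≤ q) :
    IsOpener R v ↔ appearsRow lam f 1 v ∧ ¬ appearsRow lam f 2 v :=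
  (hcompat v hv hvq).2.1

theorem isCloser_iff (hcompat : BlockCompat lam q f R) (hv : 1 ≤ v) (hvq : v ≤ q) :
    IsCloser R v ↔ appearsRow lam f 2 v ∧ ¬ appearsRow lam f 1 v :=
  (hcompat v hv hvq).2.2.1

theorem isMiddle_iff (hcompat : BlockCompat lam q f R) (hv : 1 ≤ v) (hvq : v ≤ q) :
    IsMiddle R v ↔ appearsRow lam f 1 v ∧ appearsRow lam f 2 v :=
  (hcompat v hv hvq).2.2.2

theorem cnt_one_eq (hcompat : BlockCompat lam q f R) (hj : j ≤ q) :
    cnt lam f 1 j = (openers R j).card + (middles R j).card := by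
  have hop : openers R j = ((Finset.Icc 1 j).filter (appearsRow lam f 1)).filter
      (fun v => ¬ appearsRow lam f 2 v) := by
    rw [Finset.filter_filter]
    refine Finset.filter_congr fun v hv => ?_
    exact hcompat.isOpener_iff (Finset.mem_Icc.mp hv).1 ((Finset.mem_Icc.mp hv).2.trans hj)
  have hmid : middles R j = ((Finset.Icc 1 j).filter (appearsRow lam f 1)).filter
      (appearsRow lam f 2) := by
    rw [Finset.filter_filter]
    refine Finset.filter_congr fun v hv => ?_
    exact hcompat.isMiddle_iff (Finset.mem_Icc.mp hv).1 ((Finset.mem_Icc.mp hv).2.trans hj)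
  rw [cnt, hop, hmid, add_comm, Finset.card_filter_add_card_filter_not]

theorem cnt_two_eq (hcompat : BlockCompat lam q f R) (hj : j ≤ q) :
    cnt lam f 2 j = (closers R j).card + (middles R j).card := by
  have hcl : closers R j = ((Finset.Icc 1 j).filter (appearsRow lam f 2)).filter
      (fun v => ¬ appearsRow lam f 1 v) := by
    rw [Finset.filter_filter]
    refine Finset.filter_congr fun v hv => ?_
    exact hcompat.isCloser_iff (Finset.mem_Icc.mp hv).1 ((Finset.mem_Icc.mp hv).2.trans hj)
  have hmid : middles R j = ((Finset.Icc 1 j).filter (appearsRow lam f 2)).filter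
      (appearsRow lam f 1) := by
    rw [Finset.filter_filter]
    refine Finset.filter_congr fun v hv => ?_
    rw [hcompat.isMiddle_iff (Finset.mem_Icc.mp hv).1 ((Finset.mem_Icc.mp hv).2.trans hj), and_comm]
  rw [cnt, hcl, hmid, add_comm, Finset.card_filter_add_card_filter_not]

theorem cnt_one_eq_cnt_two_add (hR : IsNCPartition q R) (hcompat : BlockCompat lam q f R)
    (hj : j ≤ q) : cnt lam f 1 j = cnt lam f 2 j + (openAt q R j).card := by
  rw [hcompat.cnt_one_eq hj, hcompat.cnt_two_eq hj, hR.card_openers_eq]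
  omega

theorem isBalance_iff (hR : IsNCPartition q R) (hcompat : BlockCompat lam q f R)
    (hj : j ≤ q) : isBalance lam f j ↔ openAt q R j = ∅ := by
  rw [isBalance, hcompat.cnt_one_eq_cnt_two_add hR hj, ← Finset.card_eq_zero]
  omega

theorem isTeeter_iff (hR : IsNCPartition q R) (hcompat : BlockCompat lam q f R)
    (hj : 1 ≤ j) (hjq : j ≤ q) :
    isTeeter lam f j ↔ IsMiddle R j ∧ (openAt q R j).card = 1 := by
  rw [isTeeter, hcompat.isMiddle_iff hj hjq, hcompat.cnt_one_eq_cnt_two_add hR hjq, and_assoc,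
    Nat.add_left_cancel_iff, eq_comm]

theorem isBalance_blockMax_one (hR : IsNCPartition q R) (hcompat : BlockCompat lam q f R)
    (h1 : IsOpener R 1) : isBalance lam f (blockMax q R 1) :=
  (hcompat.isBalance_iff hR (hR.bounds (hR.R_one_blockMax_one h1)).2.2.2).mpr
    (hR.openAt_blockMax_one h1)

theorem not_isBalance_of_lt_blockMax_one (hR : IsNCPartition q R)
    (hcompat : BlockCompat lam q f R) (h1 : IsOpener R 1) (hm : 1 ≤ m)
    (hmb : m < blockMax q R 1) : ¬ isBalance lam f m := by
  have hbq := (hR.bounds (hR.R_one_blockMax_one h1)).2.2.2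
  rw [hcompat.isBalance_iff hR (by omega)]
  exact Finset.ne_empty_of_mem (IsNCPartition.one_mem_openAt h1 hm hmb)

theorem isTeeter_iff_R_one (hR : IsNCPartition q R) (hcompat : BlockCompat lam q f R)
    (h1 : IsOpener R 1) (hm : 1 ≤ m) (hmb : m < blockMax q R 1) :
    isTeeter lam f m ↔ R 1 m ∧ m ≠ 1 := by
  have hR1b := hR.R_one_blockMax_one h1
  rw [hcompat.isTeeter_iff hR hm (by have := (hR.bounds hR1b).2.2.2; omega)]
  constructor
  · rintro ⟨hmid, hcard⟩
    obtain ⟨u, hu, hum⟩ := hmid.1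
    have := (hR.bounds hu).2.2.1
    exact ⟨by_contra fun h => (hR.one_lt_card_openAt h1 hmid h hmb).ne' hcard, by omega⟩
  · rintro ⟨hR1m, hm1⟩
    refine ⟨⟨⟨1, hR.symm hR1m, by omega⟩, ⟨_, hR.trans (hR.symm hR1m) hR1b, hmb⟩⟩, ?_⟩
    rw [hR.openAt_eq_singleton_one h1 hR1m hm hmb, Finset.card_singleton]

end BlockCompat

theorem rowSetW_eq_empty_iff {lam : List ℕ} (f : Cell → ℕ) (v : ℕ) :
    rowSetW lam f v = ∅ ↔ ¬ ∃ c : Cell, inShape lam c ∧ f c = v := by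
  rw [Set.eq_empty_iff_forall_notMem]
  constructor
  · rintro h ⟨⟨i, k⟩, hc, hv⟩
    exact h (i + 1) ⟨by omega, k, hc, hv⟩
  · rintro h r ⟨-, k, hc, hv⟩
    exact h ⟨_, hc, hv⟩

theorem IncTab.rowSetW_eq_empty_iff_block_eq_singleton {lam : List ℕ} {q : ℕ} (T : IncTab lam q)
    {R : ℕ → ℕ → Prop} (hR : IsNCPartition q R) (hcompat : BlockCompat lam q T.entry R) (v : ℕ) :
    rowSetW lam T.entry v = ∅ ↔ ∀ u, R v u → u = v := by
  by_cases hv : 1 ≤ v ∧ v ≤ q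
  · rw [rowSetW_eq_empty_iff]
    exact (hcompat v hv.1 hv.2).1.symm
  · refine iff_of_true ?_ fun u hu => absurd ⟨(hR.bounds hu).1, (hR.bounds hu).2.1⟩ hv
    rw [rowSetW_eq_empty_iff]
    rintro ⟨c, hc, rfl⟩
    exact hv ⟨T.entry_pos c hc, T.entry_le c hc⟩

/-- for `T ∈ Inc^q(2 × c)` with noncrossing set partition `π(T)` and `B₁`
the block of `1`: (a) `w₁ = ∅` iff `B₁` is a singleton; (b) if `w₁ ≠ ∅` the first
balance point equals `max B₁`; (c) a teetering point occurs before it iff `|B₁| > 2`;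
(d) in that case the teetering points before the first balance point are exactly
`B₁ \ {1, max B₁}`, and the first one is `min (B₁ \ {1})`. -/
theorem teetering_and_balance_are_the_first_block
    (c q : ℕ) (T : IncTab (List.replicate 2 c) q)
    (R : ℕ → ℕ → Prop) (hR : IsNCPartition q R)
    (hcompat : BlockCompat (List.replicate 2 c) q T.entry R) :
    (rowSetW (List.replicate 2 c) T.entry 1 = (∅ : Set ℕ) ↔ ∀ u, R 1 u → u = 1) ∧
    (rowSetW (List.replicate 2 c) T.entry 1 ≠ (∅ : Set ℕ) →
      ∃ jb : ℕ, 1 ≤ jb ∧ jb ≤ q ∧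
        isBalance (List.replicate 2 c) T.entry jb ∧
        (∀ m, 1 ≤ m → m < jb → ¬ isBalance (List.replicate 2 c) T.entry m) ∧
        (R 1 jb ∧ ∀ u, R 1 u → u ≤ jb) ∧
        ((∃ m, 1 ≤ m ∧ m < jb ∧ isTeeter (List.replicate 2 c) T.entry m) ↔
          (∃ u u', R 1 u ∧ R 1 u' ∧ u ≠ 1 ∧ u' ≠ 1 ∧ u ≠ u')) ∧
        (∀ m, 1 ≤ m → m < jb →
          (isTeeter (List.replicate 2 c) T.entry m ↔ (R 1 m ∧ m ≠ 1 ∧ m ≠ jb))) ∧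
        (∀ jt, (1 ≤ jt ∧ jt < jb ∧ isTeeter (List.replicate 2 c) T.entry jt ∧
            (∀ m, 1 ≤ m → m < jt → ¬ isTeeter (List.replicate 2 c) T.entry m)) →
          (R 1 jt ∧ jt ≠ 1 ∧ ∀ u, R 1 u → u ≠ 1 → jt ≤ u))) := by
  have ha := T.rowSetW_eq_empty_iff_block_eq_singleton hR hcompat 1
  refine ⟨ha, fun hne => ?_⟩
  have h1 : IsOpener R 1 := hR.isOpener_one (ha.not.mp hne)
  set b := blockMax q R 1
  have hR1b : R 1 b := hR.R_one_blockMax_one h1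
  have hle : ∀ u, R 1 u → u ≤ b := fun u => hR.le_blockMax
  have hteeter : ∀ m, 1 ≤ m → m < b →
      (isTeeter (List.replicate 2 c) T.entry m ↔ (R 1 m ∧ m ≠ 1 ∧ m ≠ b)) := fun m hm hmb =>
    (hcompat.isTeeter_iff_R_one hR h1 hm hmb).trans
      (by simp only [hmb.ne, ne_eq, not_false_eq_true, and_true])
  refine ⟨b, (hR.bounds hR1b).2.2.1, (hR.bounds hR1b).2.2.2,
    hcompat.isBalance_blockMax_one hR h1,
    fun m => hcompat.not_isBalance_of_lt_blockMax_one hR h1, ⟨hR1b, hle⟩, ⟨?_, ?_⟩, hteeter, ?_⟩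
  · rintro ⟨m, hm, hmb, ht⟩
    obtain ⟨hR1m, hm1, hmb'⟩ := (hteeter m hm hmb).mp ht
    exact ⟨m, b, hR1m, hR1b, hm1, by omega, hmb'⟩
  · rintro ⟨u, u', hu, hu', hu1, hu'1, huu'⟩
    wlog hlt : u < u' generalizing u u'
    · exact this u' u hu' hu hu'1 hu1 huu'.symm (by omega)
    have hub : u < b := hlt.trans_le (hle u' hu')
    exact ⟨u, (hR.bounds hu).2.2.1, hub, (hteeter u (hR.bounds hu).2.2.1 hub).mpr ⟨hu, hu1, hub.ne⟩⟩
  · rintro jt ⟨hjt, hjtb, ht, hfirst⟩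
    obtain ⟨hR1jt, hjt1, -⟩ := (hteeter jt hjt hjtb).mp ht
    refine ⟨hR1jt, hjt1, fun u hu hu1 => not_lt.mp fun hlt => hfirst u (hR.bounds hu).2.2.1 hlt ?_⟩
    exact (hteeter u (hR.bounds hu).2.2.1 (hlt.trans hjtb)).mpr ⟨hu, hu1, (hlt.trans hjtb).ne⟩
end
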